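/- Let K be a field of characteristic 0. Then J(K) is an algebraically complete URE-group: for every g ∈ J(K) and every integer n ≥ 1, there exists a unique ω ∈ J(K) such that ω^[n] = g. -/

import Mathlib

open PowerSeries Finset

/-- Composition `f ∘ g` of formal power series (substitution of `g` into `f`).
This coefficientwise formula agrees with the usual substitution whenever the
constant coefficient of `g` is zero, since then `g ^ j` has order at least `j`. -/
noncomputable def psComp {Z : Type*} [CommRing Z] (f g : Z⟦X⟧) : Z⟦X⟧ :=
  PowerSeries.mk fun n => ∑ j ∈ Finset.range (n + 1), coeff j f * coeff n (g ^ j)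

/-- The `m`-th compositional iterate: `ω^[0] = X` and `ω^[m+1] = ω ∘ ω^[m]`. -/
noncomputable def psIter {Z : Type*} [CommRing Z] (ω : Z⟦X⟧) : ℕ → Z⟦X⟧
  | 0 => PowerSeries.X
  | m + 1 => psComp ω (psIter ω m)

/-!
If `ω, ω' ∈ J(R)` agree below degree `k ≥ 2`, then their `m`-th iterates also agree below
degree `k`, and their `k`-th coefficients differ by exactly `m • (ω_k - ω'_k)`: in the
composition sum for the `k`-th coefficient of `f ∘ g`, everything except the terms `j = 1`
and `j = k` depends only on coefficients below degree `k`. When `n` is invertible, the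
coefficients of an `n`-th iterative root of `g` are therefore forced one degree at a time,
which gives uniqueness, and solving for them defines the root.
-/

section CommRing

variable {R : Type*} [CommRing R] {f f' g g' ω ω' : R⟦X⟧} {k : ℕ}

lemma coeff_eq_of_X_pow_dvd_sub (h : X ^ k ∣ f - f') {i : ℕ} (hi : i < k) :
    coeff i f = coeff i f' :=
  sub_eq_zero.mp (by simpa using X_pow_dvd_iff.mp h i hi)

lemma X_pow_succ_dvd_of_coeff_eq_zero (h : X ^ k ∣ f) (hk : coeff k f = 0) :
    X ^ (k + 1) ∣ f := by
  refine X_pow_dvd_iff.mpr fun i hi => ?_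
  rcases (Nat.lt_succ_iff.mp hi).lt_or_eq with hik | rfl
  · exact X_pow_dvd_iff.mp h i hik
  · exact hk

lemma X_pow_dvd_pow_sub_pow (h : X ^ k ∣ g - g') (j : ℕ) : X ^ k ∣ g ^ j - g' ^ j :=
  h.trans (sub_dvd_pow_sub_pow g g' j)

/-- For `j ≥ 2` every term of the cofactor `∑ gᵃ g'ʲ⁻¹⁻ᵃ` of `g - g'` is divisible by `X`. -/
lemma X_pow_succ_dvd_pow_sub_pow (hg : constantCoeff g = 0) (hg' : constantCoeff g' = 0)
    (h : X ^ k ∣ g - g') {j : ℕ} (hj : 2 ≤ j) : X ^ (k + 1) ∣ g ^ j - g' ^ j := by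
  rw [← geom_sum₂_mul, pow_succ, mul_comm _ (g - g')]
  refine mul_dvd_mul h (dvd_sum fun i hi => ?_)
  rcases Nat.eq_zero_or_pos i with rfl | hi0
  · exact (dvd_pow (X_dvd_iff.mpr hg') (by omega)).mul_left _
  · exact (dvd_pow (X_dvd_iff.mpr hg) hi0.ne').mul_right _

lemma coeff_pow_eq_of_X_pow_dvd_sub (hg : constantCoeff g = 0) (hg' : constantCoeff g' = 0)
    (h : X ^ k ∣ g - g') {j : ℕ} (hj : j ≠ 1) : coeff k (g ^ j) = coeff k (g' ^ j) := by
  rcases Nat.lt_or_ge j 2 with hj2 | hj2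
  · obtain rfl : j = 0 := by omega
    simp
  · exact coeff_eq_of_X_pow_dvd_sub (X_pow_succ_dvd_pow_sub_pow hg hg' h hj2) k.lt_succ_self

lemma coeff_pow_self_of_constantCoeff_eq_zero (hg : constantCoeff g = 0) (j : ℕ) :
    coeff j (g ^ j) = coeff 1 g ^ j := by
  obtain ⟨h, rfl⟩ := X_dvd_iff.mpr hg
  rw [mul_pow, coeff_X_pow_mul', if_pos le_rfl, Nat.sub_self, coeff_zero_eq_constantCoeff,
    map_pow, ← coeff_zero_eq_constantCoeff, ← coeff_succ_X_mul]

lemma coeff_psComp (f g : R⟦X⟧) (m : ℕ) :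
    coeff m (psComp f g) = ∑ j ∈ range (m + 1), coeff j f * coeff m (g ^ j) :=
  coeff_mk _ _

lemma constantCoeff_psComp (f g : R⟦X⟧) : constantCoeff (psComp f g) = constantCoeff f := by
  simp [← coeff_zero_eq_constantCoeff, coeff_psComp]

lemma coeff_one_psComp (f g : R⟦X⟧) : coeff 1 (psComp f g) = coeff 1 f * coeff 1 g := by
  simp [coeff_psComp, sum_range_succ]

lemma X_pow_dvd_psComp_sub (hf : X ^ k ∣ f - f') (hg : X ^ k ∣ g - g') :
    X ^ k ∣ psComp f g - psComp f' g' := by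
  refine X_pow_dvd_iff.mpr fun d hd => ?_
  rw [map_sub, coeff_psComp, coeff_psComp, sub_eq_zero]
  refine sum_congr rfl fun j hj => ?_
  rw [coeff_eq_of_X_pow_dvd_sub hf (by have := mem_range.mp hj; omega),
    coeff_eq_of_X_pow_dvd_sub (X_pow_dvd_pow_sub_pow hg j) hd]

/-- Only the terms `j = 1` and `j = k` of the composition sum involve `coeff k f` or
`coeff k g`. -/
lemma coeff_psComp_sub (hg0 : constantCoeff g = 0) (hg0' : constantCoeff g' = 0)
    (hf : X ^ k ∣ f - f') (hg : X ^ k ∣ g - g') (hk : 2 ≤ k) :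
    coeff k (psComp f g) - coeff k (psComp f' g') =
      coeff 1 f * (coeff k g - coeff k g') + (coeff k f - coeff k f') * coeff 1 g ^ k := by
  have hlow : ∑ j ∈ range k, (coeff j f * coeff k (g ^ j) - coeff j f' * coeff k (g' ^ j)) =
      coeff 1 f * (coeff k g - coeff k g') := by
    rw [sum_eq_single 1]
    · rw [← coeff_eq_of_X_pow_dvd_sub hf (by omega), pow_one, pow_one, mul_sub]
    · intro j hj hj1
      rw [coeff_eq_of_X_pow_dvd_sub hf (mem_range.mp hj),
        coeff_pow_eq_of_X_pow_dvd_sub hg0 hg0' hg hj1, sub_self]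
    · exact fun h => absurd (mem_range.mpr (by omega)) h
  rw [sum_sub_distrib] at hlow
  rw [coeff_psComp, coeff_psComp, sum_range_succ, sum_range_succ,
    coeff_pow_self_of_constantCoeff_eq_zero hg0, coeff_pow_self_of_constantCoeff_eq_zero hg0',
    ← coeff_eq_of_X_pow_dvd_sub hg (by omega : 1 < k)]
  linear_combination hlow

lemma constantCoeff_psIter (h0 : constantCoeff ω = 0) : ∀ m, constantCoeff (psIter ω m) = 0
  | 0 => constantCoeff_X
  | _ + 1 => (constantCoeff_psComp _ _).trans h0

lemma coeff_one_psIter (ω : R⟦X⟧) : ∀ m, coeff 1 (psIter ω m) = coeff 1 ω ^ m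
  | 0 => by simp [psIter]
  | m + 1 => by rw [psIter, coeff_one_psComp, coeff_one_psIter ω m, pow_succ']

lemma X_pow_dvd_psIter_sub (h : X ^ k ∣ ω - ω') : ∀ m, X ^ k ∣ psIter ω m - psIter ω' m
  | 0 => by simp [psIter]
  | m + 1 => X_pow_dvd_psComp_sub h (X_pow_dvd_psIter_sub h m)

lemma coeff_psIter_sub (h0 : constantCoeff ω = 0) (h1 : coeff 1 ω = 1)
    (h0' : constantCoeff ω' = 0) (h : X ^ k ∣ ω - ω') (hk : 2 ≤ k) (m : ℕ) :
    coeff k (psIter ω m) - coeff k (psIter ω' m) = m * (coeff k ω - coeff k ω') := by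
  induction m with
  | zero => simp [psIter]
  | succ m ih =>
    rw [psIter, psIter, coeff_psComp_sub (constantCoeff_psIter h0 m) (constantCoeff_psIter h0' m)
      h (X_pow_dvd_psIter_sub h m) hk, ih, h1, coeff_one_psIter, h1, one_pow, one_pow]
    push_cast
    ring

theorem eq_of_psIter_eq [NoZeroDivisors R] {n : ℕ} (hn : (n : R) ≠ 0)
    (h0 : constantCoeff ω = 0) (h1 : coeff 1 ω = 1)
    (h0' : constantCoeff ω' = 0) (h1' : coeff 1 ω' = 1)
    (h : psIter ω n = psIter ω' n) : ω = ω' := by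
  have hdvd : ∀ k, X ^ k ∣ ω - ω' := by
    intro k
    induction k with
    | zero => simp
    | succ k ih =>
      refine X_pow_succ_dvd_of_coeff_eq_zero ih ?_
      rw [map_sub, sub_eq_zero]
      rcases Nat.lt_or_ge k 2 with hk | hk
      · interval_cases k
        · rw [coeff_zero_eq_constantCoeff, h0, h0']
        · rw [h1, h1']
      · have hcoeff := coeff_psIter_sub h0 h1 h0' ih hk n
        rw [h, sub_self, eq_comm, mul_eq_zero] at hcoeff
        exact sub_eq_zero.mp (hcoeff.resolve_left hn)
  ext i
  exact coeff_eq_of_X_pow_dvd_sub (hdvd (i + 1)) i.lt_succ_self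

end CommRing

section Field

variable {K : Type*} [Field K]

/-- The `k`-th coefficient of the `n`-th iterative root of `g`, given its truncation `t`
below degree `k`. -/
noncomputable def iterRootCoeff (g : K⟦X⟧) (n k : ℕ) (t : K⟦X⟧) : K :=
  if k < 2 then coeff k X else (coeff k g - coeff k (psIter t n)) / n

noncomputable def iterRootTrunc (g : K⟦X⟧) (n : ℕ) : ℕ → K⟦X⟧
  | 0 => 0
  | k + 1 => iterRootTrunc g n k + C (iterRootCoeff g n k (iterRootTrunc g n k)) * X ^ k

noncomputable def iterRoot (g : K⟦X⟧) (n : ℕ) : K⟦X⟧ :=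
  mk fun k => iterRootCoeff g n k (iterRootTrunc g n k)

lemma coe_trunc_iterRoot (g : K⟦X⟧) (n : ℕ) :
    ∀ k, (trunc k (iterRoot g n) : K⟦X⟧) = iterRootTrunc g n k
  | 0 => by simp [iterRootTrunc]
  | k + 1 => by
    rw [trunc_succ, Polynomial.coe_add, coe_trunc_iterRoot g n k, Polynomial.coe_monomial,
      monomial_eq_C_mul_X_pow, iterRootTrunc, iterRoot, coeff_mk]

lemma coeff_iterRoot (g : K⟦X⟧) (n k : ℕ) :
    coeff k (iterRoot g n) = iterRootCoeff g n k (trunc k (iterRoot g n)) := by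
  rw [coe_trunc_iterRoot, iterRoot, coeff_mk]

lemma constantCoeff_iterRoot (g : K⟦X⟧) (n : ℕ) : constantCoeff (iterRoot g n) = 0 := by
  simp [← coeff_zero_eq_constantCoeff, coeff_iterRoot, iterRootCoeff]

lemma coeff_one_iterRoot (g : K⟦X⟧) (n : ℕ) : coeff 1 (iterRoot g n) = 1 := by
  simp [coeff_iterRoot, iterRootCoeff]

theorem psIter_iterRoot {g : K⟦X⟧} (hg0 : constantCoeff g = 0) (hg1 : coeff 1 g = 1) {n : ℕ}
    (hn : (n : K) ≠ 0) : psIter (iterRoot g n) n = g := by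
  set ω := iterRoot g n
  have h0 : constantCoeff ω = 0 := constantCoeff_iterRoot g n
  have h1 : coeff 1 ω = 1 := coeff_one_iterRoot g n
  ext k
  rcases Nat.lt_or_ge k 2 with hk | hk
  · interval_cases k
    · rw [coeff_zero_eq_constantCoeff, constantCoeff_psIter h0, hg0]
    · rw [coeff_one_psIter, h1, one_pow, hg1]
  set t : K⟦X⟧ := (trunc k ω : K⟦X⟧)
  have hωt : X ^ k ∣ ω - t := ⟨_, sub_eq_iff_eq_add.mpr (eq_X_pow_mul_shift_add_trunc k ω)⟩
  have htk : coeff k t = 0 := by simp [t, coeff_trunc]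
  have ht0 : constantCoeff t = 0 := by
    rw [← coeff_zero_eq_constantCoeff, ← coeff_eq_of_X_pow_dvd_sub hωt (by omega),
      coeff_zero_eq_constantCoeff, h0]
  have hωk : coeff k ω = (coeff k g - coeff k (psIter t n)) / n := by
    rw [coeff_iterRoot, iterRootCoeff, if_neg (by omega)]
  have hdiff := coeff_psIter_sub h0 h1 ht0 hωt hk n
  rw [htk, sub_zero, hωk, mul_div_cancel₀ _ hn] at hdiff
  linear_combination hdiff

end Field

/-- for a field `K` of characteristic 0, `𝒥(K)` is an algebraically complete
URE-group: every `g ∈ 𝒥(K)` has a unique iterative root of each order `n ≥ 1`. -/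
theorem substitution_group_char_zero_complete_URE {K : Type*} [Field K] [CharZero K]
    (g : K⟦X⟧) (hg0 : constantCoeff g = 0) (hg1 : coeff 1 g = 1)
    (n : ℕ) (hn : 1 ≤ n) :
    ∃! ω : K⟦X⟧, (constantCoeff ω = 0 ∧ coeff 1 ω = 1) ∧ psIter ω n = g := by
  have hnK : (n : K) ≠ 0 := Nat.cast_ne_zero.mpr (by omega)
  have hroot := psIter_iterRoot hg0 hg1 hnK
  refine ⟨iterRoot g n, ⟨⟨constantCoeff_iterRoot g n, coeff_one_iterRoot g n⟩, hroot⟩, ?_⟩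
  rintro ω ⟨⟨h0, h1⟩, hω⟩
  exact eq_of_psIter_eq hnK h0 h1 (constantCoeff_iterRoot g n) (coeff_one_iterRoot g n)
    (hω.trans hroot.symm)
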